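/- Let f : ℝ → ℝ be continuous and 1-periodic, and let p = (a,b) ∈ ℝ² with b ≠ 0. Set M = |b| + max_{y∈[0,1]} b·f(y). If |a| ≤ ∫₀¹ √((M − b f(y))² − b²) dy, then the constant H̄ = M satisfies: there exists a Lipschitz 1-periodic function v : ℝ → ℝ with √((a + v'(y))² + b²) + b f(y) = H̄ for almost every y. -/

import Mathlib

open MeasureTheory Set Function intervalIntegral
open scoped NNReal

/-!
Since `M - b f ≥ |b|`, the function `g = √((M - b f)² - b²)` is continuous, nonnegative and
1-periodic, and the equation reduces to `|a + v'| = g`. Take `v' = -a + s g` with a sign `s = ±1`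
that is `+1` on `[0, τ)` and `-1` on `[τ, 1)` (extended periodically). By the intermediate value
theorem `τ` can be chosen so that `∫₀^τ g - ∫_τ^1 g = a`, which is possible exactly because
`|a| ≤ ∫₀¹ g`; then `v'` has mean zero, so its primitive `v` is periodic, and it is Lipschitz
because `v'` is bounded. By the Lebesgue differentiation theorem `v` has derivative `v'` almost
everywhere.
-/

section Primitive

variable {E : Type*} [NormedAddCommGroup E]

theorem MeasureTheory.LocallyIntegrable.intervalIntegrable {w : ℝ → E}
    (hw : LocallyIntegrable w volume) (s t : ℝ) : IntervalIntegrable w volume s t :=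
  (hw.integrableOn_isCompact isCompact_uIcc).intervalIntegrable

theorem locallyIntegrable_of_norm_le {w : ℝ → E} {C : ℝ} (hw : AEStronglyMeasurable w volume)
    (hC : ∀ x, ‖w x‖ ≤ C) : LocallyIntegrable w volume :=
  (memLp_top_of_bound hw C (.of_forall hC)).locallyIntegrable le_top

variable [NormedSpace ℝ E]

theorem lipschitzWith_primitive {w : ℝ → E} {C : ℝ≥0} (hw : LocallyIntegrable w volume)
    (hC : ∀ x, ‖w x‖ ≤ C) (c : ℝ) : LipschitzWith C fun x => ∫ t in c..x, w t :=
  LipschitzWith.of_dist_le_mul fun x y => by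
    rw [dist_eq_norm, integral_interval_sub_left (hw.intervalIntegrable _ _)
      (hw.intervalIntegrable _ _), Real.dist_eq]
    exact norm_integral_le_of_norm_le_const fun t _ => hC t

theorem Function.Periodic.primitive_of_integral_eq_zero {w : ℝ → E} {T : ℝ}
    (hper : Periodic w T) (hw : ∀ s t, IntervalIntegrable w volume s t)
    (hmean : ∫ x in 0..T, w x = 0) : Periodic (fun x => ∫ t in 0..x, w t) T := fun x => by
  dsimp only
  rw [hper.intervalIntegral_add_eq_add 0 x hw, zero_add, hmean, add_zero]

theorem exists_lipschitzWith_periodic_ae_hasDerivAt [CompleteSpace E] {w : ℝ → E} {T C : ℝ}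
    (hw : AEStronglyMeasurable w volume) (hC : ∀ x, ‖w x‖ ≤ C) (hper : Periodic w T)
    (hmean : ∫ x in 0..T, w x = 0) :
    ∃ (v : ℝ → E) (L : ℝ≥0), LipschitzWith L v ∧ Periodic v T ∧
      ∀ᵐ x, HasDerivAt v (w x) x := by
  have hloc := locallyIntegrable_of_norm_le hw hC
  refine ⟨fun x => ∫ t in 0..x, w t, C.toNNReal,
    lipschitzWith_primitive hloc (fun x => (hC x).trans (Real.le_coe_toNNReal C)) 0,
    hper.primitive_of_integral_eq_zero hloc.intervalIntegrable hmean, ?_⟩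
  filter_upwards [LocallyIntegrable.ae_hasDerivAt_integral hloc] with x hx using hx 0

end Primitive

theorem Function.Periodic.le_sSup_image_Icc {h : ℝ → ℝ} {c : ℝ} (hper : Periodic h c)
    (hc : 0 < c) (hh : Continuous h) (y : ℝ) : h y ≤ sSup (h '' Icc 0 c) := by
  have hrange : h '' Icc 0 c = range h := by simpa using hper.image_Icc hc 0
  rw [hrange]
  exact le_csSup (hper.isBounded_of_continuous hc.ne' hh).bddAbove (mem_range_self y)

noncomputable def signSwitch (τ y : ℝ) : ℝ := if Int.fract y < τ then 1 else -1

section SignSwitch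

variable {τ : ℝ}

theorem periodic_signSwitch (τ : ℝ) : Periodic (signSwitch τ) 1 := fun y => by
  simp [signSwitch]

theorem measurable_signSwitch (τ : ℝ) : Measurable (signSwitch τ) :=
  Measurable.ite (measurableSet_lt measurable_fract measurable_const) measurable_const
    measurable_const

theorem abs_signSwitch (τ y : ℝ) : |signSwitch τ y| = 1 := by
  unfold signSwitch; split_ifs <;> simp

theorem signSwitch_eqOn_Ioo_left (hτ : τ ≤ 1) : EqOn (signSwitch τ) 1 (Ioo 0 τ) :=
  fun y hy => by
    simp [signSwitch, Int.fract_eq_self.mpr ⟨hy.1.le, hy.2.trans_le hτ⟩, hy.2]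

theorem signSwitch_eqOn_Ioo_right (hτ : 0 ≤ τ) : EqOn (signSwitch τ) (-1) (Ioo τ 1) :=
  fun y hy => by
    simp [signSwitch, Int.fract_eq_self.mpr ⟨hτ.trans hy.1.le, hy.2⟩, hy.1.le]

theorem integral_signSwitch_mul {g : ℝ → ℝ} (hτ : τ ∈ Icc 0 1)
    (hg₀ : IntervalIntegrable g volume 0 τ) (hg₁ : IntervalIntegrable g volume τ 1) :
    ∫ y in 0..1, signSwitch τ y * g y = (∫ y in 0..τ, g y) - ∫ y in τ..1, g y := by
  have hleft : EqOn (fun y => signSwitch τ y * g y) g (Ioo 0 τ) := fun y hy => by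
    simp [signSwitch_eqOn_Ioo_left hτ.2 hy]
  have hright : EqOn (fun y => signSwitch τ y * g y) (fun y => -g y) (Ioo τ 1) := fun y hy => by
    simp [signSwitch_eqOn_Ioo_right hτ.1 hy]
  rw [← integral_add_adjacent_intervals (b := τ), integral_congr_Ioo_of_le hτ.1 hleft,
    integral_congr_Ioo_of_le hτ.2 hright, intervalIntegral.integral_neg, sub_eq_add_neg]
  · exact (intervalIntegrable_congr_uIoo (by rwa [uIoo_of_le hτ.1])).mpr hg₀
  · exact (intervalIntegrable_congr_uIoo (by rwa [uIoo_of_le hτ.2])).mpr hg₁.neg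

end SignSwitch

theorem exists_lipschitzWith_periodic_abs_add_deriv_eq {g : ℝ → ℝ} (hg : Continuous g)
    (hper : Periodic g 1) {a : ℝ} (ha : |a| ≤ ∫ y in 0..1, g y) :
    ∃ (v v' : ℝ → ℝ) (L : ℝ≥0), LipschitzWith L v ∧ Periodic v 1 ∧
      ∀ᵐ y, HasDerivAt v (v' y) y ∧ |a + v' y| = |g y| := by
  have hg_int : ∀ s t, IntervalIntegrable g volume s t := hg.intervalIntegrable
  obtain ⟨τ, hτ, hτ_mass⟩ : ∃ τ ∈ Icc (0 : ℝ) 1,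
      ∫ y in 0..τ, g y = ((∫ y in 0..1, g y) + a) / 2 := by
    refine intermediate_value_Icc zero_le_one (continuous_primitive hg_int 0).continuousOn ?_
    simp only [mem_Icc, integral_same]
    constructor <;> linarith [abs_le.mp ha]
  obtain ⟨C, hC⟩ : ∃ C, ∀ y, |g y| ≤ C := by
    obtain ⟨C, hC⟩ :=
      isBounded_iff_forall_norm_le.mp (hper.isBounded_of_continuous one_ne_zero hg)
    exact ⟨C, fun y => hC _ (mem_range_self y)⟩
  have habs : ∀ y, |signSwitch τ y * g y| = |g y| := fun y => by
    rw [abs_mul, abs_signSwitch, one_mul]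
  have hsg_meas : Measurable fun y => signSwitch τ y * g y :=
    (measurable_signSwitch τ).mul hg.measurable
  have hsg_int : IntervalIntegrable (fun y => signSwitch τ y * g y) volume 0 1 :=
    (locallyIntegrable_of_norm_le hsg_meas.aestronglyMeasurable
      (fun y => (habs y).trans_le (hC y))).intervalIntegrable 0 1
  have hmean : ∫ y in 0..1, -a + signSwitch τ y * g y = 0 := by
    have hsplit := integral_add_adjacent_intervals (hg_int 0 τ) (hg_int τ 1)
    rw [integral_add intervalIntegrable_const hsg_int,
      integral_signSwitch_mul hτ (hg_int 0 τ) (hg_int τ 1), intervalIntegral.integral_const,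
      sub_zero, one_smul]
    linarith
  obtain ⟨v, L, hv, hv_per, hv_deriv⟩ := exists_lipschitzWith_periodic_ae_hasDerivAt
    (w := fun y => -a + signSwitch τ y * g y) (C := |a| + C)
    (measurable_const.add hsg_meas).aestronglyMeasurable
    (fun y => (abs_add_le _ _).trans (by rw [abs_neg, habs]; linarith [hC y]))
    (fun y => by simp only [periodic_signSwitch τ y, hper y]) hmean
  refine ⟨v, _, L, hv, hv_per, hv_deriv.mono fun y hy => ⟨hy, ?_⟩⟩
  rw [add_neg_cancel_left, habs]

theorem shear_cell_problem_small_a_general (f : ℝ → ℝ) (hf : Continuous f)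
    (hper : Function.Periodic f 1) (a b : ℝ)
    (M : ℝ) (hM : M = |b| + sSup ((fun y => b * f y) '' Set.Icc 0 1))
    (ha : |a| ≤ ∫ y in (0:ℝ)..1, Real.sqrt ((M - b * f y) ^ 2 - b ^ 2)) :
    ∃ (v v' : ℝ → ℝ) (L : NNReal),
      LipschitzWith L v ∧ Function.Periodic v 1 ∧
      ∀ᵐ y : ℝ, HasDerivAt v (v' y) y ∧
        Real.sqrt ((a + v' y) ^ 2 + b ^ 2) + b * f y = M := by
  have hgap : ∀ y, |b| ≤ M - b * f y := fun y => by
    have := Periodic.le_sSup_image_Icc (h := fun y => b * f y) (fun y => by simp only [hper y])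
      one_pos (by fun_prop) y
    linarith
  obtain ⟨v, v', L, hv, hv_per, hv_deriv⟩ := exists_lipschitzWith_periodic_abs_add_deriv_eq
    (g := fun y => √((M - b * f y) ^ 2 - b ^ 2)) (by fun_prop)
    (fun y => by simp only [hper y]) ha
  refine ⟨v, v', L, hv, hv_per, hv_deriv.mono fun y ⟨hy, habs⟩ => ⟨hy, ?_⟩⟩
  have hnonneg : 0 ≤ (M - b * f y) ^ 2 - b ^ 2 := by
    rw [sub_nonneg, ← sq_abs b]
    exact pow_le_pow_left₀ (abs_nonneg b) (hgap y) 2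
  rw [← sq_abs, habs, sq_abs, Real.sq_sqrt hnonneg, sub_add_cancel,
    Real.sqrt_sq ((abs_nonneg b).trans (hgap y)), sub_add_cancel]

theorem shear_cell_problem_small_a (f : ℝ → ℝ) (hf : Continuous f)
    (hper : Function.Periodic f 1) (a b : ℝ) (hb : b ≠ 0)
    (M : ℝ) (hM : M = |b| + sSup ((fun y => b * f y) '' Set.Icc 0 1))
    (ha : |a| ≤ ∫ y in (0:ℝ)..1, Real.sqrt ((M - b * f y) ^ 2 - b ^ 2)) :
    ∃ (v v' : ℝ → ℝ) (L : NNReal),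
      LipschitzWith L v ∧ Function.Periodic v 1 ∧
      ∀ᵐ y : ℝ, HasDerivAt v (v' y) y ∧
        Real.sqrt ((a + v' y) ^ 2 + b ^ 2) + b * f y = M :=
  shear_cell_problem_small_a_general f hf hper a b M hM ha
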